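/- arXiv:2409.19631 — 10 statements merged into one kernel-verified Lean document; each statement's English description precedes it below -/
import Mathlib

section
/- (Schur's theorem.) Let F be a field, and let U and V be F-vector spaces. Let S be a nonzero linear subspace of Hom(U,V) in which every operator has rank at most 1. Then one of the following holds: (i) there exist a nonzero linear form f ∈ U* and a linear subspace V₀ of V such that S = { f ⊗ y : y ∈ V₀ }; (ii) there exist a nonzero vector y ∈ V and a linear subspace U₀' of U* such that S = { g ⊗ y : g ∈ U₀' }. -/
/-!
Every operator of rank at most one is `f ⊗ y`. Fix a nonzero `f ⊗ a ∈ S`. For `g ⊗ b ∈ S`, the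
operator `f ⊗ a + g ⊗ b ∈ S` has rank at most one, which forces `g ∈ F ∙ f` or `b ∈ F ∙ a`:
otherwise a vector of `ker f \ ker g` puts `b`, and then `a`, on the line spanned by the range.
Hence `S` lies in the union of the subspaces `f ⊗ V` and `U* ⊗ a`, and a subspace covered by
two subspaces lies in one of them.
-/

open LinearMap Submodule

namespace LinearMap

variable {F U V : Type*} [Field F] [AddCommGroup U] [Module F U] [AddCommGroup V] [Module F V]

theorem exists_eq_smulRight_of_rank_le_one {T : U →ₗ[F] V} (hT : rank T ≤ 1) :
    ∃ (f : U →ₗ[F] F) (y : V), T = f.smulRight y := by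
  obtain ⟨y, hy⟩ := (rank_submodule_le_one_iff' (range T)).1 hT
  by_cases hy0 : y = 0
  · refine ⟨0, 0, ext fun x => ?_⟩
    simpa [hy0] using hy (mem_range_self T x)
  obtain ⟨φ, hφ⟩ := Module.Projective.exists_dual_eq_one F hy0
  refine ⟨φ ∘ₗ T, y, ext fun x => ?_⟩
  obtain ⟨c, hc⟩ := mem_span_singleton.1 (hy (mem_range_self T x))
  simp [← hc, hφ]

theorem mem_span_singleton_of_ker_le_ker {f g : U →ₗ[F] F} (h : ker f ≤ ker g) : g ∈ F ∙ f := by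
  simpa using mem_span_of_iInf_ker_le_ker (L := fun _ : Unit => f) (by simpa using h)

theorem mem_span_singleton_or_of_rank_smulRight_add_le_one {f g : U →ₗ[F] F} {a b : V}
    (hf : f ≠ 0) (ha : a ≠ 0) (h : rank (f.smulRight a + g.smulRight b) ≤ 1) :
    g ∈ F ∙ f ∨ b ∈ F ∙ a := by
  refine or_iff_not_imp_left.2 fun hg => ?_
  obtain ⟨x₀, hfx₀, hgx₀⟩ : ∃ x, f x = 0 ∧ g x ≠ 0 := by
    by_contra! H
    exact hg (mem_span_singleton_of_ker_le_ker H)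
  obtain ⟨x₁, hfx₁⟩ : ∃ x, f x ≠ 0 := by
    by_contra! H
    exact hf (ext H)
  obtain ⟨v, hv⟩ := (rank_submodule_le_one_iff' _).1 h
  have hW : ∀ x, f x • a + g x • b ∈ F ∙ v := fun x => hv (mem_range_self _ x)
  have hb : b ∈ F ∙ v := by
    simpa [hfx₀, smul_mem_iff _ hgx₀] using hW x₀
  have ha' : a ∈ F ∙ v := by
    have := hW x₁
    rwa [Submodule.add_mem_iff_left _ (smul_mem _ _ hb), smul_mem_iff _ hfx₁] at this
  obtain ⟨α, rfl⟩ := mem_span_singleton.1 ha'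
  obtain ⟨β, rfl⟩ := mem_span_singleton.1 hb
  have hα : α ≠ 0 := by
    rintro rfl
    simp at ha
  exact mem_span_singleton.2 ⟨β / α, by rw [smul_smul, div_mul_cancel₀ _ hα]⟩

theorem coe_subset_range_smulRightₗ_union {S : Submodule F (U →ₗ[F] V)}
    (hrk : ∀ u ∈ S, rank u ≤ 1) {f : U →ₗ[F] F} {a : V} (hf : f ≠ 0) (ha : a ≠ 0)
    (hfa : f.smulRight a ∈ S) :
    (S : Set (U →ₗ[F] V)) ⊆
      ↑(range (smulRightₗ f : V →ₗ[F] U →ₗ[F] V)) ∪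
        ↑(range (smulRightₗ.flip a : (U →ₗ[F] F) →ₗ[F] U →ₗ[F] V)) := by
  intro w hw
  obtain ⟨g, b, rfl⟩ := exists_eq_smulRight_of_rank_le_one (hrk w hw)
  rcases mem_span_singleton_or_of_rank_smulRight_add_le_one hf ha (hrk _ (S.add_mem hfa hw))
    with hg | hb
  · obtain ⟨c, rfl⟩ := mem_span_singleton.1 hg
    exact Or.inl (mem_range.2 ⟨c • b, by ext; simp [smul_smul]⟩)
  · obtain ⟨c, rfl⟩ := mem_span_singleton.1 hb
    exact Or.inr (mem_range.2 ⟨c • g, by ext; simp [smul_smul, mul_comm]⟩)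

end LinearMap

theorem Submodule.coe_eq_setOf_of_le_range {R M N : Type*} [Semiring R] [AddCommMonoid M]
    [Module R M] [AddCommMonoid N] [Module R N] (L : M →ₗ[R] N) {S : Submodule R N}
    (h : S ≤ range L) : (S : Set N) = {u | ∃ y ∈ S.comap L, u = L y} := by
  ext u
  constructor
  · intro hu
    obtain ⟨y, rfl⟩ := h hu
    exact ⟨y, hu, rfl⟩
  · rintro ⟨y, hy, rfl⟩
    exact hy

/-- Schur's theorem: a nonzero linear subspace `S` of `Hom(U,V)` in which every operator
has rank at most `1` is either of the form `f ⊗ V₀` for a nonzero linear form `f` on `U`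
and a subspace `V₀` of `V`, or of the form `U₀' ⊗ y` for a nonzero vector `y` of `V`
and a subspace `U₀'` of `U*`. -/
theorem schur_rank_one_spaces (F : Type*) [Field F]
    (U V : Type*) [AddCommGroup U] [Module F U] [AddCommGroup V] [Module F V]
    (S : Submodule F (U →ₗ[F] V)) (hS : S ≠ ⊥)
    (hrk : ∀ u ∈ S, LinearMap.rank u ≤ 1) :
    (∃ f : U →ₗ[F] F, f ≠ 0 ∧ ∃ V₀ : Submodule F V,
      (S : Set (U →ₗ[F] V)) = {u | ∃ y ∈ V₀, u = f.smulRight y}) ∨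
    (∃ y : V, y ≠ 0 ∧ ∃ U₀' : Submodule F (U →ₗ[F] F),
      (S : Set (U →ₗ[F] V)) = {u | ∃ g ∈ U₀', u = g.smulRight y}) := by
  obtain ⟨T, hTS, hT⟩ := exists_mem_ne_zero_of_ne_bot hS
  obtain ⟨f, a, rfl⟩ := exists_eq_smulRight_of_rank_le_one (hrk _ hTS)
  have hf : f ≠ 0 := by
    rintro rfl
    simp at hT
  have ha : a ≠ 0 := by
    rintro rfl
    simp at hT
  rcases AddSubgroupClass.subset_union.1 (coe_subset_range_smulRightₗ_union hrk hf ha hTS)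
    with h | h
  · exact Or.inl ⟨f, hf, _, coe_eq_setOf_of_le_range (smulRightₗ f) h⟩
  · exact Or.inr ⟨a, ha, _, coe_eq_setOf_of_le_range (smulRightₗ.flip a) h⟩
end

section
/- (Substitution lemma.) Let F be a field and 0 < n ≤ p be integers. Let A ∈ Mat_{n,p}(F) have both its first row and its first column nonzero. Then there exists a matrix B ∈ Mat_{n,p}(F) of rank n whose first row equals the first row of A and whose first column equals the first column of A. -/
/-- Substitution lemma: if `A ∈ Mat_{n,p}(F)` (with `0 < n ≤ p`) has nonzero first row and
nonzero first column, then the entries outside the first row and first column can be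
modified so as to obtain a matrix of rank `n`. -/
theorem substitution_lemma (F : Type*) [Field F] (n p : ℕ) (hn : 0 < n) (hnp : n ≤ p)
    (A : Matrix (Fin n) (Fin p) F)
    (hrow : A ⟨0, hn⟩ ≠ 0)
    (hcol : (fun i => A i ⟨0, hn.trans_le hnp⟩) ≠ 0) :
    ∃ B : Matrix (Fin n) (Fin p) F, B.rank = n ∧
      (∀ j : Fin p, B ⟨0, hn⟩ j = A ⟨0, hn⟩ j) ∧
      (∀ i : Fin n, B i ⟨0, hn.trans_le hnp⟩ = A i ⟨0, hn.trans_le hnp⟩) := by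
  classical
  set zn : Fin n := ⟨0, hn⟩ with hzn
  set zp : Fin p := ⟨0, hn.trans_le hnp⟩ with hzp
  have hcast_zn : Fin.castLE hnp zn = zp := rfl
  have castinj : Function.Injective (Fin.castLE hnp) := Fin.castLE_injective hnp
  by_cases hA0 : A zn zp = 0
  · -- case A zn zp = 0
    obtain ⟨j0, hj0⟩ := Function.ne_iff.mp hrow
    obtain ⟨i0, hi0⟩ := Function.ne_iff.mp hcol
    simp only [Pi.zero_apply] at hj0 hi0
    have hj0z : j0 ≠ zp := fun h => hj0 (h ▸ hA0)
    have hi0z : i0 ≠ zn := fun h => hi0 (h ▸ hA0)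
    set σ : Fin n → Fin p := fun i => Equiv.swap (Fin.castLE hnp i0) j0 (Fin.castLE hnp i)
      with hσ
    have hσinj : Function.Injective σ := (Equiv.injective _).comp castinj
    have hσi0 : σ i0 = j0 := Equiv.swap_apply_left _ _
    have hσzn : σ zn = zp := by
      show Equiv.swap (Fin.castLE hnp i0) j0 (Fin.castLE hnp zn) = zp
      rw [hcast_zn]
      exact Equiv.swap_apply_of_ne_of_ne
        (fun h => hi0z (castinj ((hcast_zn.symm.trans h).symm)))
        (Ne.symm hj0z)
    -- auxiliary vector w
    set w : Fin p → F := fun j => (if j = zp then A i0 zp else 0) + (if j = j0 then 1 else 0)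
      with hw
    have hwzp : w zp = A i0 zp := by simp [hw, Ne.symm hj0z]
    have hwj0 : w j0 = 1 := by simp [hw, hj0z]
    set B : Matrix (Fin n) (Fin p) F := fun i j =>
      ((if i = zn then 1 else 0) * A zn j
        + (if i = zn then 0 else A i zp / A i0 zp) * w j)
        + (if i ≠ zn ∧ i ≠ i0 ∧ j = σ i then 1 else 0) with hB
    have hBrow : ∀ j, B zn j = A zn j := by
      intro j; simp [hB]
    have hBcol : ∀ i, B i zp = A i zp := by
      intro i
      by_cases h : i = zn
      · subst h; simp [hB, hA0, hwzp]
      · have hne : ¬ (zp = σ i) := fun hh => h (hσinj (by rw [← hh, hσzn]))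
        simp [hB, h, hwzp, hne, div_mul_cancel₀ _ hi0]
    refine ⟨B, ?_, hBrow, hBcol⟩
    have hind : LinearIndependent F B := by
      rw [Fintype.linearIndependent_iff]
      intro g hg
      have E : ∀ j, (∑ i, g i * (if i = zn then 1 else 0)) * A zn j
          + (∑ i, g i * (if i = zn then 0 else A i zp / A i0 zp)) * w j
          + (∑ i, g i * (if i ≠ zn ∧ i ≠ i0 ∧ j = σ i then 1 else 0)) = 0 := by
        intro j
        have h1 := congrFun hg j
        simp only [Finset.sum_apply, Pi.smul_apply, smul_eq_mul, Pi.zero_apply, hB] at h1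
        rw [Finset.sum_mul, Finset.sum_mul, ← Finset.sum_add_distrib,
          ← Finset.sum_add_distrib]
        exact (Finset.sum_congr rfl (fun i _ => by ring)).trans h1
      set P := ∑ i, g i * (if i = zn then (1:F) else 0) with hP
      set Q := ∑ i, g i * (if i = zn then (0:F) else A i zp / A i0 zp) with hQ
      have hPzn : P = g zn := by
        rw [hP, Finset.sum_eq_single zn]
        · simp
        · intro b _ hb; rw [if_neg hb, mul_zero]
        · simp
      -- evaluate at zp : Q = 0
      have hQ0 : Q = 0 := by
        have hE := E zp
        rw [hA0, hwzp] at hE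
        have hS : (∑ i, g i * (if i ≠ zn ∧ i ≠ i0 ∧ zp = σ i then (1:F) else 0)) = 0 := by
          apply Finset.sum_eq_zero
          intro i _
          have hni : ¬ (i ≠ zn ∧ i ≠ i0 ∧ zp = σ i) := by
            rintro ⟨h1, _, h3⟩
            exact h1 (hσinj (by rw [← h3, hσzn]))
          rw [if_neg hni, mul_zero]
        rw [hS] at hE
        simp only [mul_zero, zero_add, add_zero] at hE
        exact (mul_eq_zero.mp hE).resolve_right hi0
      -- evaluate at j0 : g zn = 0
      have hgzn : g zn = 0 := by
        have hE := E j0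
        rw [hQ0, hwj0] at hE
        have hS : (∑ i, g i * (if i ≠ zn ∧ i ≠ i0 ∧ j0 = σ i then (1:F) else 0)) = 0 := by
          apply Finset.sum_eq_zero
          intro i _
          have hni : ¬ (i ≠ zn ∧ i ≠ i0 ∧ j0 = σ i) := by
            rintro ⟨_, h2, h3⟩
            exact h2 (hσinj (by rw [← h3, hσi0]))
          rw [if_neg hni, mul_zero]
        rw [hS] at hE
        simp only [zero_mul, mul_one, add_zero, zero_add] at hE
        rw [hPzn] at hE
        exact (mul_eq_zero.mp hE).resolve_right hj0
      -- evaluate at σ i' for i' ∉ {zn, i0}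
      have hother : ∀ i', i' ≠ zn → i' ≠ i0 → g i' = 0 := by
        intro i' h1 h2
        have hE := E (σ i')
        have hw0 : w (σ i') = 0 := by
          have hne1 : σ i' ≠ zp := fun h => h1 (hσinj (h.trans hσzn.symm))
          have hne2 : σ i' ≠ j0 := fun h => h2 (hσinj (h.trans hσi0.symm))
          simp [hw, hne1, hne2]
        rw [hQ0, hw0, hPzn, hgzn] at hE
        have hS : (∑ i, g i * (if i ≠ zn ∧ i ≠ i0 ∧ σ i' = σ i then (1:F) else 0)) = g i' := by
          rw [Finset.sum_eq_single i']
          · rw [if_pos ⟨h1, h2, rfl⟩, mul_one]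
          · intro b _ hb
            have hni : ¬ (b ≠ zn ∧ b ≠ i0 ∧ σ i' = σ b) := by
              rintro ⟨_, _, h3⟩
              exact hb (hσinj h3.symm)
            rw [if_neg hni, mul_zero]
          · simp
        rw [hS] at hE
        simpa using hE
      -- finally g i0 = 0 from Q = 0
      have hgi0 : g i0 = 0 := by
        have hQval : Q = g i0 := by
          rw [hQ, Finset.sum_eq_single i0]
          · rw [if_neg hi0z, div_self hi0, mul_one]
          · intro b _ hb
            by_cases h : b = zn
            · rw [if_pos h, mul_zero]
            · rw [hother b h hb, zero_mul]
          · simp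
        rw [hQ0] at hQval
        exact hQval.symm
      intro i
      by_cases h1 : i = zn
      · rw [h1]; exact hgzn
      by_cases h2 : i = i0
      · rw [h2]; exact hgi0
      · exact hother i h1 h2
    rw [hind.rank_matrix, Fintype.card_fin]
  · -- case A zn zp ≠ 0
    set B : Matrix (Fin n) (Fin p) F := fun i j =>
      (if i = zn then 1 else A i zp / A zn zp) * A zn j
        + (if i ≠ zn ∧ j = Fin.castLE hnp i then 1 else 0) with hB
    have hBrow : ∀ j, B zn j = A zn j := by
      intro j; simp [hB]
    have hBcol : ∀ i, B i zp = A i zp := by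
      intro i
      by_cases h : i = zn
      · subst h; simp [hB]
      · have hne : ¬ (zp = Fin.castLE hnp i) := fun hh =>
          h (castinj (hh.symm.trans hcast_zn.symm))
        simp [hB, h, hne, div_mul_cancel₀ _ hA0]
    refine ⟨B, ?_, hBrow, hBcol⟩
    have hind : LinearIndependent F B := by
      rw [Fintype.linearIndependent_iff]
      intro g hg
      have E : ∀ j, (∑ i, g i * (if i = zn then 1 else A i zp / A zn zp)) * A zn j
          + (∑ i, g i * (if i ≠ zn ∧ j = Fin.castLE hnp i then 1 else 0)) = 0 := by
        intro j
        have h1 := congrFun hg j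
        simp only [Finset.sum_apply, Pi.smul_apply, smul_eq_mul, Pi.zero_apply, hB] at h1
        rw [Finset.sum_mul, ← Finset.sum_add_distrib]
        exact (Finset.sum_congr rfl (fun i _ => by ring)).trans h1
      set T := ∑ i, g i * (if i = zn then (1:F) else A i zp / A zn zp) with hT
      have hT0 : T = 0 := by
        have hE := E zp
        have hS : (∑ i, g i * (if i ≠ zn ∧ zp = Fin.castLE hnp i then (1:F) else 0)) = 0 := by
          apply Finset.sum_eq_zero
          intro i _
          have hni : ¬ (i ≠ zn ∧ zp = Fin.castLE hnp i) := by
            rintro ⟨h1, h2⟩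
            exact h1 (castinj (h2.symm.trans hcast_zn.symm))
          rw [if_neg hni, mul_zero]
        rw [hS, add_zero] at hE
        exact (mul_eq_zero.mp hE).resolve_right hA0
      have hother : ∀ i', i' ≠ zn → g i' = 0 := by
        intro i' h1
        have hE := E (Fin.castLE hnp i')
        rw [hT0, zero_mul, zero_add] at hE
        have hS : (∑ i, g i * (if i ≠ zn ∧ Fin.castLE hnp i' = Fin.castLE hnp i
            then (1:F) else 0)) = g i' := by
          rw [Finset.sum_eq_single i']
          · rw [if_pos ⟨h1, rfl⟩, mul_one]
          · intro b _ hb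
            have hni : ¬ (b ≠ zn ∧ Fin.castLE hnp i' = Fin.castLE hnp b) := by
              rintro ⟨_, h3⟩
              exact hb (castinj h3.symm)
            rw [if_neg hni, mul_zero]
          · simp
        rw [hS] at hE
        exact hE
      have hgzn : g zn = 0 := by
        have hTval : T = g zn := by
          rw [hT, Finset.sum_eq_single zn]
          · rw [if_pos rfl, mul_one]
          · intro b _ hb
            rw [hother b hb, zero_mul]
          · simp
        rw [hT0] at hTval
        exact hTval.symm
      intro i
      by_cases h1 : i = zn
      · rw [h1]; exact hgzn
      · exact hother i h1
    rw [hind.rank_matrix, Fintype.card_fin]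
end

section
/- (Substitution lemma, rectangular case.) Let F be a field and 0 < n < p be integers. Let A ∈ Mat_{n,p}(F) have nonzero first row. Then there exists a matrix B ∈ Mat_{n,p}(F) of rank n whose first row equals the first row of A and whose first column equals the first column of A. -/
/-- Substitution lemma, rectangular case: if `A ∈ Mat_{n,p}(F)` (with `0 < n < p`) has
nonzero first row, then the entries outside the first row and first column can be
modified so as to obtain a matrix of rank `n`. -/
theorem substitution_lemma_rectangular (F : Type*) [Field F] (n p : ℕ)
    (hn : 0 < n) (hnp : n < p)
    (A : Matrix (Fin n) (Fin p) F)
    (hrow : A ⟨0, hn⟩ ≠ 0) :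
    ∃ B : Matrix (Fin n) (Fin p) F, B.rank = n ∧
      (∀ j : Fin p, B ⟨0, hn⟩ j = A ⟨0, hn⟩ j) ∧
      (∀ i : Fin n, B i ⟨0, hn.trans hnp⟩ = A i ⟨0, hn.trans hnp⟩) := by
  obtain ⟨m, rfl⟩ : ∃ m, n = m + 1 := ⟨n - 1, (Nat.succ_pred_eq_of_pos hn).symm⟩
  have h0 : (⟨0, hn⟩ : Fin (m + 1)) = 0 := rfl
  rw [h0] at hrow ⊢
  have hp0 : (⟨0, hn.trans hnp⟩ : Fin p) = ⟨0, hn.trans hnp⟩ := rfl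
  set z : Fin p := ⟨0, hn.trans hnp⟩ with hz
  -- choose j₀ with A 0 j₀ ≠ 0, preferring j₀ ≠ z if possible
  obtain ⟨j₀, hj₀, hj₀'⟩ :
      ∃ j₀ : Fin p, A 0 j₀ ≠ 0 ∧ (j₀ = z → ∀ j ≠ z, A 0 j = 0) := by
    by_cases h : ∃ j ≠ z, A 0 j ≠ 0
    · obtain ⟨j, hjz, hj⟩ := h
      exact ⟨j, hj, fun h' => absurd h' hjz⟩
    · push_neg at h
      have hz' : A 0 z ≠ 0 := by
        intro hc
        apply hrow
        funext j
        by_cases hjz : j = z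
        · rw [hjz]; exact hc
        · exact h j hjz
      exact ⟨z, hz', fun _ => h⟩
  -- choose m distinct columns avoiding z and j₀
  obtain ⟨t, ht, htc⟩ : ∃ t ⊆ (Finset.univ \ {z, j₀} : Finset (Fin p)), t.card = m := by
    apply Finset.exists_subset_card_eq
    have h1 : ({z, j₀} : Finset (Fin p)).card ≤ 2 := Finset.card_insert_le _ _ |>.trans (by simp)
    have h2 : (Finset.univ \ {z, j₀} : Finset (Fin p)).card ≥ p - 2 := by
      rw [Finset.card_sdiff_of_subset (Finset.subset_univ _), Finset.card_univ, Fintype.card_fin]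
      omega
    omega
  set σ : Fin m → Fin p := ⇑(t.orderEmbOfFin htc) with hσ
  have hσt : ∀ k, σ k ∈ t := fun k => t.orderEmbOfFin_mem htc k
  have hσz : ∀ k, σ k ≠ z := by
    intro k hc
    have := ht (hσt k)
    rw [hc] at this
    simp at this
  have hσj₀ : ∀ k, σ k ≠ j₀ := by
    intro k hc
    have := ht (hσt k)
    rw [hc] at this
    simp at this
  have hσinj : Function.Injective σ := (t.orderEmbOfFin htc).injective
  -- define B
  set B : Matrix (Fin (m + 1)) (Fin p) F :=
    Fin.cases (A 0)
      (fun i => fun j => A i.succ z * (if j = z then 1 else 0) + (if j = σ i then 1 else 0))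
    with hB
  have hB0 : ∀ j, B 0 j = A 0 j := fun j => rfl
  have hBs : ∀ (i : Fin m) (j : Fin p),
      B i.succ j = A i.succ z * (if j = z then 1 else 0) + (if j = σ i then 1 else 0) :=
    fun i j => by rw [hB]; simp
  refine ⟨B, ?_, fun j => hB0 j, ?_⟩
  · -- rank
    have hli : LinearIndependent F B := by
      rw [Fintype.linearIndependent_iff]
      intro c hc hi
      have hev : ∀ j : Fin p, (∑ i, c i • B i) j = 0 := fun j => by rw [hc]; rfl
      have hev' : ∀ j : Fin p, c 0 * A 0 j + ∑ k : Fin m,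
          c k.succ * (A k.succ z * (if j = z then 1 else 0) + (if j = σ k then 1 else 0)) = 0 := by
        intro j
        have h := hev j
        rw [Finset.sum_apply, Fin.sum_univ_succ] at h
        simp only [Pi.smul_apply, smul_eq_mul, hB0, hBs] at h
        exact h
      -- at column σ k
      have hck : ∀ k : Fin m, c k.succ = -(c 0 * A 0 (σ k)) := by
        intro k
        have h := hev' (σ k)
        have hsum : (∑ i : Fin m, c i.succ *
            ((A i.succ z * if σ k = z then 1 else 0) + if σ k = σ i then 1 else 0))
            = c k.succ := by
          rw [Finset.sum_eq_single k]
          · simp [hσz k]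
          · intro b _ hb
            have h2 : σ k ≠ σ b := fun hh => hb (hσinj hh).symm
            simp [hσz k, h2]
          · simp
        rw [hsum] at h
        linear_combination h
      have hc0 : c 0 = 0 := by
        by_cases hj₀z : j₀ = z
        · -- A 0 j = 0 off z; evaluate at z
          have hoff := hj₀' hj₀z
          have := hev' z
          rw [Finset.sum_eq_zero] at this
          · simp only [add_zero] at this
            rw [hj₀z] at hj₀
            exact (mul_eq_zero.mp this).resolve_right hj₀
          · intro k _
            rw [hck k, hoff (σ k) (hσz k)]
            ring
        · -- evaluate at j₀
          have := hev' j₀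
          rw [Finset.sum_eq_zero] at this
          · simp only [add_zero] at this
            exact (mul_eq_zero.mp this).resolve_right hj₀
          · intro k _
            have h1 : j₀ ≠ z := hj₀z
            have h2 : j₀ ≠ σ k := fun h => hσj₀ k h.symm
            simp [h1, h2]
      refine Fin.cases hc0 (fun k => ?_) hi
      rw [hck k, hc0, zero_mul, neg_zero]
    have := hli.rank_matrix
    rwa [Fintype.card_fin] at this
  · -- first column
    intro i
    refine Fin.cases ?_ (fun k => ?_) i
    · exact hB0 z
    · rw [hBs]
      have : z ≠ σ k := fun h => hσz k h.symm
      simp [this]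
end

section
/- (Extraction lemma.) Let F be a field and 0 < n ≤ p be integers. Let A ∈ Mat_{n,p}(F), and let K ∈ Mat_{n−1,p−1}(F) be the submatrix of A obtained by deleting the last row and last column. Let E_{n,p} ∈ Mat_{n,p}(F) be the matrix whose only nonzero entry is a 1 at position (n,p). If rank A < n and rank (A + E_{n,p}) < n, then rank K < n − 1. -/
/-!
A matrix has rank below its height exactly when its left kernel is nontrivial, and a nonzero
`x` with `x_n = 0` such that `x ᵥ* A` vanishes off the last column restricts to a nonzero
vector in the left kernel of `K`. To find one, take `u`, `w` nonzero with `u ᵥ* A = 0` and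
`w ᵥ* (A + E) = 0`, so that `w ᵥ* A = -w_n e_p`. If `u_n = 0` or `w_n = 0` that vector serves
as `x`; otherwise `x = w_n u - u_n w` has `x_n = 0` and `x ᵥ* A = u_n w_n e_p ≠ 0`.
-/

open Matrix

namespace Matrix

variable {l m n R : Type*}

theorem rank_lt_card_height_iff_exists_vecMul_eq_zero [Fintype m] [Fintype n] [Field R]
    (A : Matrix m n R) : A.rank < Fintype.card m ↔ ∃ v ≠ 0, v ᵥ* A = 0 := by
  have rank_eq_iff : A.rank = Fintype.card m ↔ LinearIndependent R A.row := by
    rw [A.rank_eq_finrank_span_row, linearIndependent_iff_card_eq_finrank_span, Set.finrank,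
      eq_comm]
  rw [A.rank_le_card_height.lt_iff_ne, Ne, rank_eq_iff, Fintype.not_linearIndependent_iff]
  simp only [vecMul_eq_sum, Function.ne_iff, Pi.zero_apply, row]
  exact ⟨fun ⟨v, hv, hv0⟩ => ⟨v, hv0, hv⟩, fun ⟨v, hv0, hv⟩ => ⟨v, hv, hv0⟩⟩

theorem vecMul_single [Fintype m] [DecidableEq m] [DecidableEq n] [NonUnitalNonAssocSemiring R]
    (w : m → R) (i : m) (j : n) (c : R) : w ᵥ* single i j c = Pi.single j (w i * c) := by
  ext k
  by_cases hk : k = j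
  · subst hk
    simp [vecMul, dotProduct, single_apply]
  · simp [vecMul, dotProduct, hk, Ne.symm hk]

theorem exists_vecMul_eq_zero_off_of_vecMul_add_single_eq_zero [Fintype m] [DecidableEq m]
    [DecidableEq n] [CommRing R] [NoZeroDivisors R] {A : Matrix m n R} {i : m} {j : n}
    {u w : m → R} (hu0 : u ≠ 0) (hw0 : w ≠ 0) (hu : u ᵥ* A = 0)
    (hw : w ᵥ* (A + single i j 1) = 0) :
    ∃ x ≠ 0, x i = 0 ∧ ∀ k ≠ j, (x ᵥ* A) k = 0 := by
  have hwA : w ᵥ* A = -Pi.single j (w i) := by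
    rwa [vecMul_add, add_eq_zero_iff_eq_neg, vecMul_single, mul_one] at hw
  by_cases hui : u i = 0
  · exact ⟨u, hu0, hui, fun k _ => by simp [hu]⟩
  by_cases hwi : w i = 0
  · exact ⟨w, hw0, hwi, fun k hk => by simp [hwA, hk]⟩
  have hx : (w i • u - u i • w) ᵥ* A = Pi.single j (u i * w i) := by
    rw [sub_vecMul, smul_vecMul, smul_vecMul, hu, hwA]
    simp [← Pi.single_smul]
  refine ⟨w i • u - u i • w, fun hx0 => ?_, by simp [mul_comm], fun k hk => by simp [hx, hk]⟩
  have := congr_fun hx j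
  simp only [hx0, zero_vecMul, Pi.zero_apply, Pi.single_eq_same] at this
  exact mul_ne_zero hui hwi this.symm

theorem vecMul_submatrix_castSucc_of_last_eq_zero [Fintype l] [NonUnitalNonAssocSemiring R]
    {k : ℕ} (A : Matrix (Fin (k + 1)) n R) {x : Fin (k + 1) → R} (hx : x (Fin.last k) = 0)
    (c : l → n) : (x ∘ Fin.castSucc) ᵥ* A.submatrix Fin.castSucc c = fun j => (x ᵥ* A) (c j) := by
  ext j
  simp [vecMul, dotProduct, Fin.sum_univ_castSucc, hx]

theorem rank_submatrix_castSucc_castSucc_lt [Field R] {m q : ℕ}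
    (A : Matrix (Fin (m + 1)) (Fin (q + 1)) R) (hA : A.rank < m + 1)
    (hAE : (A + single (Fin.last m) (Fin.last q) 1).rank < m + 1) :
    (A.submatrix Fin.castSucc Fin.castSucc).rank < m := by
  obtain ⟨u, hu0, hu⟩ :=
    (rank_lt_card_height_iff_exists_vecMul_eq_zero A).1 (by rwa [Fintype.card_fin])
  obtain ⟨w, hw0, hw⟩ :=
    (rank_lt_card_height_iff_exists_vecMul_eq_zero _).1 (by rwa [Fintype.card_fin])
  obtain ⟨x, hx0, hx_last, hxA⟩ :=
    exists_vecMul_eq_zero_off_of_vecMul_add_single_eq_zero hu0 hw0 hu hw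
  have hx_castSucc : x ∘ Fin.castSucc ≠ 0 := fun h => hx0 <| funext fun i =>
    Fin.lastCases hx_last (fun i => congr_fun h i) i
  simpa using (rank_lt_card_height_iff_exists_vecMul_eq_zero _).2 ⟨_, hx_castSucc, by
    rw [vecMul_submatrix_castSucc_of_last_eq_zero A hx_last]
    exact funext fun j => hxA _ (Fin.castSucc_ne_last j)⟩

end Matrix

/-- Extraction lemma: let `A ∈ Mat_{n,p}(F)` with `0 < n ≤ p`, let `K` be the submatrix of
`A` obtained by deleting the last row and column, and let `E` be the matrix whose only
nonzero entry is a `1` at position `(n,p)`. If `rank A < n` and `rank (A + E) < n`,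
then `rank K < n - 1`. -/
theorem extraction_lemma (F : Type*) [Field F] (n p : ℕ) (hn : 0 < n) (hnp : n ≤ p)
    (A : Matrix (Fin n) (Fin p) F)
    (hA : A.rank < n)
    (hAE : (A + Matrix.single (⟨n - 1, by omega⟩ : Fin n)
        (⟨p - 1, by omega⟩ : Fin p) (1 : F)).rank < n) :
    (A.submatrix (Fin.castLE (n.sub_le 1)) (Fin.castLE (p.sub_le 1))).rank < n - 1 := by
  obtain ⟨m, rfl⟩ : ∃ m, n = m + 1 := ⟨n - 1, by omega⟩
  obtain ⟨q, rfl⟩ : ∃ q, p = q + 1 := ⟨p - 1, by omega⟩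
  exact rank_submatrix_castSucc_castSucc_lt A hA hAE
end

section
/- Let F be a field, U and V finite-dimensional F-vector spaces, and S a linear subspace of Hom(U,V). Let S^⊥ := { v ∈ Hom(V,U) : ∀ u ∈ S, tr(v ∘ u) = 0 } be its trace orthogonal complement. For y ∈ V, let ŷ : S^⊥ → U be the evaluation map v ↦ v(y). Then S ∩ { u ∈ Hom(U,V) : range u ⊆ F·y } = { f ⊗ y : f ∈ U*, f vanishes on the range of ŷ }. -/
open LinearMap Module

private lemma trace_smulRight_eq (F : Type*) [Field F] (U : Type*) [AddCommGroup U]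
    [Module F U] [FiniteDimensional F U] (f : U →ₗ[F] F) (x : U) :
    LinearMap.trace F U (f.smulRight x) = f x := by
  have h : f.smulRight x = dualTensorHom F U U (f ⊗ₜ x) := by
    ext u; simp [dualTensorHom_apply]
  rw [h, trace_eq_contract_apply]
  simp

private lemma comp_smulRight_eq {F : Type*} [Field F] {U V : Type*} [AddCommGroup U]
    [Module F U] [AddCommGroup V] [Module F V] (f : U →ₗ[F] F) (y : V) (v : V →ₗ[F] U) :
    v ∘ₗ f.smulRight y = f.smulRight (v y) := by
  ext u; simp

/-- Let `S` be a linear subspace of `Hom(U,V)` with `U, V` finite-dimensional, and let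
`S^⊥` be its trace orthogonal complement in `Hom(V,U)`. For `y ∈ V`, the operators of `S`
with range contained in the line `F·y` are exactly the maps `f ⊗ y` where `f ∈ U*`
vanishes on the range of the evaluation map `ŷ : v ∈ S^⊥ ↦ v(y)`. -/
theorem trace_duality_rank_one_slices (F : Type*) [Field F]
    (U V : Type*) [AddCommGroup U] [Module F U] [AddCommGroup V] [Module F V]
    [FiniteDimensional F U] [FiniteDimensional F V]
    (S : Submodule F (U →ₗ[F] V)) (y : V) :
    (S : Set (U →ₗ[F] V)) ∩ {u | LinearMap.range u ≤ Submodule.span F {y}} =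
      {w | ∃ f : U →ₗ[F] F,
        (∀ v : V →ₗ[F] U, (∀ u ∈ S, LinearMap.trace F U (v ∘ₗ u) = 0) → f (v y) = 0) ∧
        w = f.smulRight y} := by
  -- the trace pairing as a map to the dual
  set e : (V →ₗ[F] U) →ₗ[F] Module.Dual F (U →ₗ[F] V) :=
    (LinearMap.llcomp F U V U).compr₂ (LinearMap.trace F U) with he
  have he_apply : ∀ (v : V →ₗ[F] U) (u : U →ₗ[F] V),
      e v u = LinearMap.trace F U (v ∘ₗ u) := fun v u => rfl
  have hinj : Function.Injective e := by
    rw [← LinearMap.ker_eq_bot, LinearMap.ker_eq_bot']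
    intro v hv
    ext z
    rw [LinearMap.zero_apply, ← Module.forall_dual_apply_eq_zero_iff F]
    intro φ
    have := congrArg (fun ψ : Module.Dual F (U →ₗ[F] V) => ψ (φ.smulRight z)) hv
    simp only [LinearMap.zero_apply] at this
    rw [he_apply] at this
    rwa [comp_smulRight_eq, trace_smulRight_eq] at this
  have hsurj : Function.Surjective e := by
    have hrank : Module.finrank F (V →ₗ[F] U) =
        Module.finrank F (Module.Dual F (U →ₗ[F] V)) := by
      rw [Subspace.dual_finrank_eq, Module.finrank_linearMap, Module.finrank_linearMap,
        mul_comm]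
    exact (LinearMap.injective_iff_surjective_of_finrank_eq_finrank hrank).1 hinj
  ext w
  simp only [Set.mem_inter_iff, Set.mem_setOf_eq, SetLike.mem_coe]
  constructor
  · rintro ⟨hwS, hwr⟩
    by_cases hy : y = 0
    · refine ⟨0, by simp, ?_⟩
      subst hy
      have : w = 0 := by
        ext x
        have := hwr (LinearMap.mem_range_self w x)
        simpa [Submodule.span_zero_singleton] using this
      simp [this]
    · obtain ⟨g, hg⟩ : ∃ g : Module.Dual F V, g y ≠ 0 := by
        by_contra h
        push_neg at h
        exact hy ((Module.forall_dual_apply_eq_zero_iff F y).1 h)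
      set g' : Module.Dual F V := (g y)⁻¹ • g with hg'
      have hg'y : g' y = 1 := by simp [hg', inv_mul_cancel₀ hg]
      refine ⟨g' ∘ₗ w, ?_, ?_⟩
      · intro v hv
        have hw : w = (g' ∘ₗ w).smulRight y := by
          ext x
          obtain ⟨c, hc⟩ := Submodule.mem_span_singleton.1 (hwr (LinearMap.mem_range_self w x))
          simp only [smulRight_apply, coe_comp, Function.comp_apply]
          rw [← hc, map_smul, hg'y, smul_eq_mul, mul_one]
        have := hv w hwS
        rwa [hw, comp_smulRight_eq, trace_smulRight_eq] at this
      · ext x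
        obtain ⟨c, hc⟩ := Submodule.mem_span_singleton.1 (hwr (LinearMap.mem_range_self w x))
        simp only [smulRight_apply, coe_comp, Function.comp_apply]
        rw [← hc, map_smul, hg'y, smul_eq_mul, mul_one]
  · rintro ⟨f, hf, rfl⟩
    constructor
    · -- membership in S via double annihilator
      rw [← Subspace.dualAnnihilator_dualCoannihilator_eq (W := S)]
      rw [Submodule.mem_dualCoannihilator]
      intro φ hφ
      obtain ⟨v, rfl⟩ := hsurj φ
      have hv : ∀ u ∈ S, LinearMap.trace F U (v ∘ₗ u) = 0 := by
        intro u hu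
        exact (Submodule.mem_dualAnnihilator _).1 hφ u hu
      rw [he_apply, comp_smulRight_eq, trace_smulRight_eq]
      exact hf v hv
    · intro z hz
      obtain ⟨x, rfl⟩ := hz
      simp only [smulRight_apply]
      exact Submodule.smul_mem _ _ (Submodule.mem_span_singleton_self y)
end

section
/- Let F be an infinite field, let U and V be finite-dimensional F-vector spaces with dim V = n, and let 𝒮 be a nonempty affine subspace of Hom(U,V) such that every operator in 𝒮 has rank less than n. Then every operator in the linear span of 𝒮 has rank less than n. -/
/-- Over an infinite field, if every operator in a nonempty affine subspace `𝒮` of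
`Hom(U,V)` has rank less than `n = dim V`, then so does every operator in the linear
span of `𝒮`. -/
theorem span_of_bounded_rank_affine (F : Type*) [Field F] [Infinite F]
    (U V : Type*) [AddCommGroup U] [Module F U] [AddCommGroup V] [Module F V]
    [FiniteDimensional F U] [FiniteDimensional F V]
    (n : ℕ) (hV : Module.finrank F V = n)
    (𝒮 : AffineSubspace F (U →ₗ[F] V)) (hne : (𝒮 : Set (U →ₗ[F] V)).Nonempty)
    (hrk : ∀ u ∈ 𝒮, Module.finrank F (LinearMap.range u) < n) :
    ∀ u ∈ Submodule.span F (𝒮 : Set (U →ₗ[F] V)),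
      Module.finrank F (LinearMap.range u) < n := by
  obtain ⟨A, hA⟩ := hne
  -- rank < n iff not surjective
  have key : ∀ u : U →ₗ[F] V,
      Module.finrank F (LinearMap.range u) < n ↔ ¬ Function.Surjective u := by
    intro u
    constructor
    · intro h hs
      rw [LinearMap.range_eq_top.mpr hs] at h
      simp [finrank_top, hV] at h
    · intro h
      have hne' : LinearMap.range u ≠ ⊤ := fun ht => h (LinearMap.range_eq_top.mp ht)
      have hle : Module.finrank F (LinearMap.range u) ≤ n := hV ▸ Submodule.finrank_le _
      refine lt_of_le_of_ne hle fun heq => hne' ?_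
      exact Submodule.eq_top_of_finrank_eq (by rw [heq, hV])
  -- elements of the direction are not surjective
  have hdir : ∀ z ∈ 𝒮.direction, ¬ Function.Surjective z := by
    intro z hz hsurj
    obtain ⟨g, hg⟩ := z.exists_rightInverse_of_surjective (LinearMap.range_eq_top.mpr hsurj)
    set B : Module.End F V := A.comp g with hB
    obtain ⟨c, hc⟩ := (B.finite_spectrum.infinite_compl).nonempty
    have hcunit : IsUnit (algebraMap F (Module.End F V) c - B) := by
      by_contra hcu
      exact hc (spectrum.mem_iff.mpr hcu)
    have hunit : IsUnit (B + (-c) • (1 : Module.End F V)) := by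
      have : B + (-c) • (1 : Module.End F V) = -(algebraMap F (Module.End F V) c - B) := by
        ext v; simp [Module.algebraMap_end_apply]; abel
      rw [this]; exact hcunit.neg
    have hbij : Function.Bijective (B + (-c) • (1 : Module.End F V)) :=
      (Module.End.isUnit_iff _).mp hunit
    have hmem : (-c) • z + A ∈ 𝒮 :=
      AffineSubspace.vadd_mem_of_mem_direction (Submodule.smul_mem _ (-c) hz) hA
    have hsurj2 : Function.Surjective ((-c) • z + A) := by
      have hcomp : ((-c) • z + A).comp g = B + (-c) • (1 : Module.End F V) := by
        ext v
        simp [hB, hg, LinearMap.comp_apply, LinearMap.add_apply, LinearMap.smul_apply]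
        have := congrArg (fun f : V →ₗ[F] V => f v) hg
        simp at this
        rw [this]; abel
      have := hbij.surjective
      rw [← hcomp, LinearMap.coe_comp] at this
      exact this.of_comp
    exact (key _).mp (hrk _ hmem) hsurj2
  -- main argument
  intro u hu
  have hsub : Submodule.span F (𝒮 : Set (U →ₗ[F] V)) ≤ (F ∙ A) ⊔ 𝒮.direction := by
    rw [Submodule.span_le]
    intro x hx
    have hd : x - A ∈ 𝒮.direction := AffineSubspace.vsub_mem_direction hx hA
    exact Submodule.mem_sup.mpr ⟨A, Submodule.mem_span_singleton_self A, x - A, hd, by abel⟩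
  obtain ⟨y, hy, z, hz, huyz⟩ := Submodule.mem_sup.mp (hsub hu)
  obtain ⟨c, rfl⟩ := Submodule.mem_span_singleton.mp hy
  rw [key]
  rcases eq_or_ne c 0 with rfl | hc
  · intro hs
    rw [← huyz] at hs
    simp at hs
    exact hdir z hz hs
  · have hmem : c⁻¹ • z + A ∈ 𝒮 :=
      AffineSubspace.vadd_mem_of_mem_direction (Submodule.smul_mem _ c⁻¹ hz) hA
    have hns : ¬ Function.Surjective (c⁻¹ • z + A) := (key _).mp (hrk _ hmem)
    intro hs
    apply hns
    intro v
    obtain ⟨x, hx⟩ := hs (c • v)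
    refine ⟨x, ?_⟩
    rw [← huyz] at hx
    have : (c⁻¹ • z + A) x = c⁻¹ • ((c • A + z) x) := by
      simp [smul_smul, inv_mul_cancel₀ hc]
      rw [add_comm]
    rw [this, hx, smul_smul, inv_mul_cancel₀ hc, one_smul]
end

section
/- Let F ⊆ K be a field extension, and let n ≤ p be positive integers with |F| > n (F may be finite or infinite). Let A ∈ Mat_{n,p}(F) and let V₀ be a linear subspace of Mat_{n,p}(F) such that rank(A + N) < n for all N ∈ V₀. Then, viewing matrices over F as matrices over K via the inclusion, every matrix of the form A + Σᵢ cᵢ Nᵢ with c₁,…,c_k ∈ K and N₁,…,N_k ∈ V₀ has rank (over K) less than n. -/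
/-!
An `n`-row matrix has rank `< n` exactly when all its maximal minors vanish. A maximal minor of
`A + ∑ cᵢ Nᵢ` is the value at `c` of the corresponding minor of the generic combination
`A + ∑ Xᵢ Nᵢ`, a polynomial over `F` of total degree at most `n`. By hypothesis this polynomial
vanishes on all of `F^k`; since `n < |F|` it is the zero polynomial, so it also vanishes at
`c ∈ K^k`.
-/

open Matrix MvPolynomial

namespace MvPolynomial

theorem eq_zero_of_forall_eval_zero_of_totalDegree_lt_card {R σ : Type*} [CommRing R] [IsDomain R]
    [Finite σ] (P : MvPolynomial σ R) (hdeg : (P.totalDegree : Cardinal) < Cardinal.mk R)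
    (h : ∀ x, eval x P = 0) : P = 0 := by
  obtain ⟨S, hS⟩ := Cardinal.exists_finset_eq_card (n := P.totalDegree + 1)
    (by rw [Nat.cast_succ, ← Cardinal.succ_natCast]; exact Order.succ_le_of_lt hdeg)
  exact eq_zero_of_eval_zero_at_prod_finset P (fun _ ↦ S)
    (fun i ↦ hS ▸ Nat.lt_succ_of_le (degreeOf_le_totalDegree P i)) fun x _ ↦ h x

theorem totalDegree_det_le {R σ m : Type*} [CommRing R] [Fintype m] [DecidableEq m]
    {d : ℕ} (M : Matrix m m (MvPolynomial σ R)) (h : ∀ i j, (M i j).totalDegree ≤ d) :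
    M.det.totalDegree ≤ Fintype.card m * d := by
  rw [det_apply]
  refine (totalDegree_finsetSum _ _).trans (Finset.sup_le fun σ _ ↦ ?_)
  refine (totalDegree_smul_le _ _).trans <| (totalDegree_finsetProd _ _).trans ?_
  simpa using Finset.sum_le_sum fun i (_ : i ∈ Finset.univ) ↦ h (σ i) i

end MvPolynomial

namespace Matrix

section Minors

variable {R m n : Type*} [Field R] [Fintype m] [DecidableEq m] [Fintype n]

theorem exists_det_submatrix_ne_zero_of_rank_eq (M : Matrix m n R) (h : M.rank = Fintype.card m) :
    ∃ S : m → n, (M.submatrix id S).det ≠ 0 := by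
  obtain ⟨κ, a, ha, hspan, hli⟩ := exists_linearIndependent' R M.col
  have : Finite κ := Finite.of_injective a ha
  cases nonempty_fintype κ
  have hcard : Fintype.card κ = Fintype.card m := by
    rw [← finrank_span_eq_card hli, hspan, ← rank_eq_finrank_span_cols, h]
  let e := Fintype.equivOfCardEq hcard.symm
  refine ⟨a ∘ e, ((isUnit_iff_isUnit_det _).mp (linearIndependent_cols_iff_isUnit.mp ?_)).ne_zero⟩
  exact hli.comp e e.injective

theorem rank_lt_card_iff_forall_det_submatrix_eq_zero (M : Matrix m n R) :
    M.rank < Fintype.card m ↔ ∀ S : m → n, (M.submatrix id S).det = 0 := by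
  refine ⟨fun h S ↦ ?_, fun h ↦ ?_⟩
  · by_contra hS
    have := rank_of_det_ne_zero hS ▸ M.rank_submatrix_le id S
    omega
  · refine M.rank_le_card_height.lt_of_ne fun hM ↦ ?_
    obtain ⟨S, hS⟩ := M.exists_det_submatrix_ne_zero_of_rank_eq hM
    exact hS (h S)

end Minors

section GenericCombination

variable {F ι m n : Type*} [CommRing F] [Fintype ι]

noncomputable def genericCombination (A : Matrix m n F) (N : ι → Matrix m n F) :
    Matrix m n (MvPolynomial ι F) :=
  A.map C + ∑ t, (X t : MvPolynomial ι F) • (N t).map C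

theorem totalDegree_genericCombination_apply_le [Nontrivial F] (A : Matrix m n F)
    (N : ι → Matrix m n F) (i : m) (j : n) : (genericCombination A N i j).totalDegree ≤ 1 := by
  simp only [genericCombination, Matrix.add_apply, Matrix.sum_apply, Matrix.smul_apply, map_apply,
    smul_eq_mul]
  refine (totalDegree_add _ _).trans (max_le (by simp) ?_)
  refine (totalDegree_finsetSum _ _).trans (Finset.sup_le fun t _ ↦ ?_)
  exact (totalDegree_mul _ _).trans (by simp)

theorem aeval_det_submatrix_genericCombination {K : Type*} [CommRing K] [Algebra F K]
    [Fintype m] [DecidableEq m] (A : Matrix m n F) (N : ι → Matrix m n F) (c : ι → K)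
    (S : m → n) :
    aeval c ((genericCombination A N).submatrix id S).det =
      ((A.map (algebraMap F K) + ∑ t, c t • (N t).map (algebraMap F K)).submatrix id S).det := by
  rw [AlgHom.map_det, AlgHom.mapMatrix_apply, ← submatrix_map]
  congr
  ext i j
  simp [genericCombination, Matrix.sum_apply]

end GenericCombination

end Matrix

theorem rank_bound_extends_to_extension_general (F K : Type*) [Field F] [Field K] [Algebra F K]
    (n p : ℕ) (hcard : (n : Cardinal) < Cardinal.mk F)
    (A : Matrix (Fin n) (Fin p) F) (V₀ : Submodule F (Matrix (Fin n) (Fin p) F))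
    (hrk : ∀ N ∈ V₀, (A + N).rank < n) :
    ∀ (k : ℕ) (c : Fin k → K) (N : Fin k → Matrix (Fin n) (Fin p) F),
      (∀ i, N i ∈ V₀) →
      (A.map (algebraMap F K) + ∑ i, c i • (N i).map (algebraMap F K)).rank < n := by
  intro k c N hN
  suffices ∀ S, ((A.map (algebraMap F K) + ∑ i, c i • (N i).map (algebraMap F K)).submatrix id
      S).det = 0 by simpa using (rank_lt_card_iff_forall_det_submatrix_eq_zero _).mpr this
  intro S
  have hvanish (a : Fin k → F) : eval a ((genericCombination A N).submatrix id S).det = 0 := by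
    have hmem : ∑ i, a i • N i ∈ V₀ := Submodule.sum_mem _ fun i _ ↦ V₀.smul_mem _ (hN i)
    have hminor := (rank_lt_card_iff_forall_det_submatrix_eq_zero _).mp
      (by simpa using hrk _ hmem) S
    exact (aeval_det_submatrix_genericCombination A N a S).trans (by simpa using hminor)
  have hdeg : ((genericCombination A N).submatrix id S).det.totalDegree ≤ n := by
    simpa using totalDegree_det_le ((genericCombination A N).submatrix id S) fun i j ↦
      totalDegree_genericCombination_apply_le A N i (S j)
  rw [← aeval_det_submatrix_genericCombination, eq_zero_of_forall_eval_zero_of_totalDegree_lt_card _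
    ((Nat.cast_le.mpr hdeg).trans_lt hcard) hvanish, map_zero]

/-- Let `F ⊆ K` be a field extension and `0 < n ≤ p` with `|F| > n`. If `A` is an `n×p`
matrix over `F` and `V₀` a linear subspace of `Mat_{n,p}(F)` such that `rank (A + N) < n`
for all `N ∈ V₀`, then every `K`-linear combination `A + Σᵢ cᵢ Nᵢ` with `cᵢ ∈ K` and
`Nᵢ ∈ V₀` has rank (over `K`) less than `n`. -/
theorem rank_bound_extends_to_extension (F K : Type*) [Field F] [Field K] [Algebra F K]
    (n p : ℕ) (hn : 0 < n) (hnp : n ≤ p) (hcard : (n : Cardinal) < Cardinal.mk F)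
    (A : Matrix (Fin n) (Fin p) F) (V₀ : Submodule F (Matrix (Fin n) (Fin p) F))
    (hrk : ∀ N ∈ V₀, (A + N).rank < n) :
    ∀ (k : ℕ) (c : Fin k → K) (N : Fin k → Matrix (Fin n) (Fin p) F),
      (∀ i, N i ∈ V₀) →
      (A.map (algebraMap F K) + ∑ i, c i • (N i).map (algebraMap F K)).rank < n :=
  rank_bound_extends_to_extension_general F K n p hcard A V₀ hrk
end

section
/- Let F be a field and n ≤ p be positive integers with p ≥ 2. Then every affine hyperplane of Mat_{n,p}(F) (i.e., every affine subspace of dimension np − 1) contains a matrix of rank n. -/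
/-!
An affine hyperplane is a level set `{M | f M = c}` of a nonzero linear functional `f`, and `f`
does not vanish on some matrix unit `E i j`. Take a partial permutation matrix `B` whose row `i`
has its `1` outside column `j`. Then `B * Bᵀ = 1` and `X = t • E i j * Bᵀ` satisfies `X * X = 0`,
so `Bᵀ * (1 - X)` is a right inverse of `B + t • E i j`, which therefore has full row rank for
every `t`. Choosing `t` so that `f (B + t • E i j) = c` gives the required matrix.
-/

open Matrix Module

theorem Submodule.exists_ker_eq_of_finrank_add_one {K V : Type*} [Field K] [AddCommGroup V]
    [Module K V] [FiniteDimensional K V] (S : Submodule K V)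
    (hS : finrank K S + 1 = finrank K V) :
    ∃ f : V →ₗ[K] K, f ≠ 0 ∧ LinearMap.ker f = S := by
  have hS_lt : S < ⊤ := Submodule.lt_top_of_finrank_lt_finrank (by omega)
  obtain ⟨f, hf, hle⟩ := S.exists_le_ker_of_lt_top hS_lt
  have := Submodule.finrank_lt (mt LinearMap.ker_eq_top.1 hf)
  exact ⟨f, hf, (Submodule.eq_of_le_of_finrank_le hle (by omega)).symm⟩

theorem AffineSubspace.mem_iff_of_direction_eq_ker {K V : Type*} [Field K] [AddCommGroup V]
    [Module K V] {s : AffineSubspace K V} {f : V →ₗ[K] K} (hs : s.direction = LinearMap.ker f)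
    {a : V} (ha : a ∈ s) (x : V) : x ∈ s ↔ f x = f a := by
  rw [← AffineSubspace.vsub_right_mem_direction_iff_mem ha, hs, LinearMap.mem_ker, vsub_eq_sub,
    map_sub, sub_eq_zero]

theorem Function.exists_injective_apply_ne {α β : Type*} [Fintype α] [Fintype β] [Nontrivial β]
    (h : Fintype.card α ≤ Fintype.card β) (a : α) (b : β) :
    ∃ σ : α → β, Function.Injective σ ∧ σ a ≠ b := by
  classical
  obtain ⟨τ⟩ := Function.Embedding.nonempty_of_card_le h
  obtain ⟨b', hb'⟩ := exists_ne b
  exact ⟨Equiv.swap (τ a) b' ∘ τ, (Equiv.injective _).comp τ.injective, by simpa using hb'⟩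

namespace Matrix

variable {m k R : Type*} [Fintype m] [Fintype k]

theorem rank_eq_card_height_of_mul_eq_one [CommRing R] [StrongRankCondition R] [DecidableEq m]
    {A : Matrix m k R} {B : Matrix k m R} (h : A * B = 1) : A.rank = Fintype.card m :=
  le_antisymm A.rank_le_card_height (by simpa [h, rank_one] using A.rank_mul_le_left B)

theorem add_mul_mul_one_sub_eq_one [Ring R] [DecidableEq m] {B E : Matrix m k R}
    {N : Matrix k m R} (hB : B * N = 1) (hE : E * N * E = 0) :
    (B + E) * (N * (1 - E * N)) = 1 := by
  have hsq : E * N * (E * N) = 0 := by rw [← Matrix.mul_assoc, hE, Matrix.zero_mul]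
  rw [← Matrix.mul_assoc, Matrix.add_mul, hB]
  simp only [Matrix.add_mul, Matrix.mul_sub, Matrix.one_mul, Matrix.mul_one, hsq]
  abel

variable [DecidableEq m] [DecidableEq k]

theorem rank_submatrix_one_add_single [Field R] {σ : m → k} (hσ : Function.Injective σ)
    {i : m} {j : k} (hij : σ i ≠ j) (t : R) :
    ((1 : Matrix k k R).submatrix σ id + single i j t).rank = Fintype.card m := by
  refine rank_eq_card_height_of_mul_eq_one
    (add_mul_mul_one_sub_eq_one (N := (1 : Matrix k k R).submatrix id σ) ?_ ?_)
  · rw [← submatrix_mul _ _ _ id _ Function.bijective_id, Matrix.one_mul, submatrix_one σ hσ]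
  · simp [hij.symm]

theorem exists_rank_eq_card_height_of_ne_zero [Field R] [Nontrivial k]
    (hcard : Fintype.card m ≤ Fintype.card k) {f : Matrix m k R →ₗ[R] R} (hf : f ≠ 0)
    (c : R) :
    ∃ M : Matrix m k R, f M = c ∧ M.rank = Fintype.card m := by
  obtain ⟨i, j, hij⟩ : ∃ i j, f (single i j 1) ≠ 0 := by
    by_contra! h
    exact hf ((stdBasis R m k).ext fun ⟨i, j⟩ => by simpa [stdBasis_eq_single] using h i j)
  obtain ⟨σ, hσ, hσi⟩ := Function.exists_injective_apply_ne hcard i j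
  set B : Matrix m k R := (1 : Matrix k k R).submatrix σ id
  obtain ⟨t, ht⟩ : ∃ t, t * f (single i j 1) = c - f B := ⟨_, div_mul_cancel₀ _ hij⟩
  refine ⟨B + single i j t, ?_, rank_submatrix_one_add_single hσ hσi t⟩
  have hsingle : single i j t = t • single i j 1 := by rw [smul_single, smul_eq_mul, mul_one]
  rw [map_add, hsingle, map_smul, smul_eq_mul, ht, add_sub_cancel]

end Matrix

/-- For `0 < n ≤ p` and `p ≥ 2`, every affine hyperplane of `Mat_{n,p}(F)` (a nonempty
affine subspace of dimension `np - 1`) contains a matrix of rank `n`. -/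
theorem affine_hyperplane_contains_full_rank (F : Type*) [Field F]
    (n p : ℕ) (hn : 0 < n) (hnp : n ≤ p) (hp : 2 ≤ p)
    (𝓗 : AffineSubspace F (Matrix (Fin n) (Fin p) F))
    (hne : (𝓗 : Set (Matrix (Fin n) (Fin p) F)).Nonempty)
    (hdim : Module.finrank F 𝓗.direction = n * p - 1) :
    ∃ M ∈ 𝓗, M.rank = n := by
  obtain ⟨A, hA⟩ := hne
  have hcodim : finrank F 𝓗.direction + 1 = finrank F (Matrix (Fin n) (Fin p) F) := by
    rw [hdim, finrank_matrix]
    have := Nat.mul_le_mul hn (by omega : 1 ≤ p)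
    simp only [Fintype.card_fin, finrank_self, mul_one]
    omega
  obtain ⟨f, hf, hker⟩ := 𝓗.direction.exists_ker_eq_of_finrank_add_one hcodim
  have : Nontrivial (Fin p) := Fin.nontrivial_iff_two_le.2 hp
  obtain ⟨M, hfM, hM⟩ := exists_rank_eq_card_height_of_ne_zero (by simpa using hnp) hf (f A)
  refine ⟨M, (AffineSubspace.mem_iff_of_direction_eq_ker hker.symm hA M).2 hfM, ?_⟩
  simpa using hM
end

section
/- Let F be a field and 2 ≤ n ≤ p be integers with p ≥ 3. Let φ : Mat_{n−1,p}(F) → Mat_{1,p}(F) be an affine map such that for every N ∈ Mat_{n−1,p}(F), the n×p matrix obtained by appending the row φ(N) below N has rank less than n. Then there exists Y ∈ F^{n−1} such that φ(N) = Yᵀ N for all N ∈ Mat_{n−1,p}(F). -/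
/-!
Write `φ N = L N + b`. The rank condition says that `φ N` lies in the span of the rows of `N`
whenever these rows are independent, so every functional `f` vanishing on them vanishes on
`φ N`. For `f ≠ 0`, `i` and `w ∈ ker f`, choose independent rows in `ker f` that stay independent
when `w` is added to the `i`-th one; this is possible because `dim ker f = p - 1` is at least
`n - 1` and at least `2`. Subtracting the two instances gives `f (L (w at row i)) = 0`. So
`w ↦ L (w at row i)` maps every vector into its own span, hence is a homothety `Y i • id`; and
`f b = f (φ N) - f (L N) = 0` for independent rows `N` in `ker f`, so `b = 0`.
-/

open Module Submodule Function Set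

section LinearAlgebra

variable {F V : Type*} [Field F] [AddCommGroup V] [Module F V]

theorem LinearIndependent.update_add_self {ι : Type*} [DecidableEq ι] {v : ι → V}
    (hv : LinearIndependent F v) {i k : ι} (hki : k ≠ i) :
    LinearIndependent F (Function.update v i (v i + v k)) :=
  hv.update i _ ⟨1, one_mem _, Finsupp.single i 1 + Finsupp.single k 1, by
    simp [hki], by simp⟩

theorem exists_embedding_apply_eq {ι κ : Type*} [Fintype ι] [Fintype κ] [DecidableEq κ]
    (h : Fintype.card ι ≤ Fintype.card κ) (i : ι) (c : κ) : ∃ e : ι ↪ κ, e i = c := by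
  obtain ⟨e⟩ := Function.Embedding.nonempty_of_card_le h
  exact ⟨e.trans (Equiv.swap (e i) c).toEmbedding, by simp⟩

theorem exists_linearIndependent_of_card_le_finrank {ι : Type*} [Fintype ι]
    (h : Fintype.card ι ≤ finrank F V) : ∃ v : ι → V, LinearIndependent F v := by
  obtain ⟨v, hv⟩ := exists_linearIndependent_of_le_finrank h
  exact ⟨v ∘ Fintype.equivFin ι, hv.comp _ (Equiv.injective _)⟩

theorem exists_linearIndependent_update_add [FiniteDimensional F V] {ι : Type*} [Fintype ι]
    [DecidableEq ι] (hι : Fintype.card ι ≤ finrank F V) (hV : 2 ≤ finrank F V) (i : ι) (w : V) :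
    ∃ v : ι → V, LinearIndependent F v ∧ LinearIndependent F (update v i (v i + w)) := by
  classical
  by_cases hw : w = 0
  · obtain ⟨v, hv⟩ := exists_linearIndependent_of_card_le_finrank hι
    exact ⟨v, hv, by simpa only [hw, add_zero, update_eq_self] using hv⟩
  -- rows `B (e j)` of a basis `B` with `B a = w` and `e i ≠ a`: adding `w` to row `i` is then
  -- an elementary operation on `B`
  have hs : LinearIndepOn F id {w} := .singleton hw
  set B := Basis.extend hs
  have : Fintype (hs.extend (subset_univ _)) := FiniteDimensional.fintypeBasisIndex B
  set a : hs.extend (subset_univ _) := ⟨w, hs.subset_extend _ rfl⟩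
  have hcard : finrank F V = Fintype.card (hs.extend (subset_univ _)) := finrank_eq_card_basis B
  have : Nontrivial (hs.extend (subset_univ _)) := Fintype.one_lt_card_iff_nontrivial.mp (by omega)
  obtain ⟨c, hca⟩ := exists_ne a
  obtain ⟨e, hei⟩ := exists_embedding_apply_eq (hι.trans hcard.le) i c
  refine ⟨B ∘ e, B.linearIndependent.comp e e.injective, ?_⟩
  have hBa : B a = w := Basis.extend_apply_self hs a
  have key := (B.linearIndependent.update_add_self hca.symm).comp e e.injective
  rwa [← hei, update_comp_eq_of_injective _ e.injective, hBa] at key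

theorem LinearMap.exists_eq_smul_id_of_forall_dual_apply_eq_zero
    {f : V →ₗ[F] V} (h : ∀ (φ : Dual F V) (v : V), φ v = 0 → φ (f v) = 0) :
    ∃ c : F, f = c • 1 := by
  refine exists_eq_smul_id_of_forall_notLinearIndependent fun v hv ↦ ?_
  have hfv : f v ∈ span F {v} := by
    rw [← Subspace.forall_mem_dualAnnihilator_apply_eq_zero_iff]
    intro φ hφ
    exact h φ v ((mem_dualAnnihilator φ).mp hφ v (mem_span_singleton_self v))
  obtain ⟨c, hc⟩ := mem_span_singleton.mp hfv
  exact (LinearIndependent.pair_iff' (hv.ne_zero 0)).mp hv c hc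

theorem dual_apply_eq_zero_of_mem_span {ι : Type*} {φ : Dual F V} {v : ι → V}
    (hvφ : ∀ i, φ (v i) = 0) {x : V} (hx : x ∈ span F (range v)) : φ x = 0 :=
  (span_le (p := LinearMap.ker φ)).mpr (range_subset_iff.mpr hvφ) hx

section RowCondition

variable {ι : Type*} [Fintype ι] [DecidableEq ι] [FiniteDimensional F V]
  {L : (ι → V) →ₗ[F] V} {b : V}
  (hL : ∀ v : ι → V, LinearIndependent F v → L v + b ∈ span F (range v))
include hL

theorem dual_apply_single_eq_zero (hι : Fintype.card ι < finrank F V) (hV : 2 < finrank F V)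
    (φ : Dual F V) (i : ι) {w : V} (hw : φ w = 0) : φ (L (Pi.single i w)) = 0 := by
  rcases eq_or_ne φ 0 with rfl | hφ
  · rfl
  set K := LinearMap.ker φ
  have hK : finrank F K + 1 = finrank F V := Dual.finrank_ker_add_one_of_ne_zero hφ
  obtain ⟨v, hv, hv'⟩ := exists_linearIndependent_update_add (F := F) (V := K)
    (by omega) (by omega) i ⟨w, hw⟩
  have hφK (u : ι → K) (hu : LinearIndependent F u) : φ (L (K.subtype ∘ u) + b) = 0 :=
    dual_apply_eq_zero_of_mem_span (fun j ↦ (u j).2) (hL _ (hu.map' _ (ker_subtype _)))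
  have hupd : K.subtype ∘ update v i (v i + ⟨w, hw⟩) = K.subtype ∘ v + Pi.single i w := by
    ext j
    by_cases hj : j = i
    · subst hj; simp
    · simp [hj]
  calc φ (L (Pi.single i w))
      = φ (L (K.subtype ∘ update v i (v i + ⟨w, hw⟩)) + b) - φ (L (K.subtype ∘ v) + b) := by
        rw [hupd]; simp only [map_add]; ring
    _ = 0 := by rw [hφK _ hv', hφK _ hv, sub_zero]

theorem dual_apply_eq_zero_of_forall_apply_eq_zero (hι : Fintype.card ι < finrank F V)
    (hV : 2 < finrank F V) {φ : Dual F V} {v : ι → V} (hvφ : ∀ i, φ (v i) = 0) :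
    φ (L v) = 0 := by
  rw [← Finset.univ_sum_single v, map_sum, map_sum]
  exact Finset.sum_eq_zero fun i _ ↦ dual_apply_single_eq_zero hL hι hV φ i (hvφ i)

theorem eq_zero_of_forall_mem_span (hι : Fintype.card ι < finrank F V) (hV : 2 < finrank F V) :
    b = 0 := by
  refine (forall_dual_apply_eq_zero_iff F b).mp fun φ ↦ ?_
  rcases eq_or_ne φ 0 with rfl | hφ
  · rfl
  set K := LinearMap.ker φ
  have hK : finrank F K + 1 = finrank F V := Dual.finrank_ker_add_one_of_ne_zero hφ
  obtain ⟨v, hv⟩ := exists_linearIndependent_of_card_le_finrank (F := F) (V := K) (ι := ι)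
    (by omega)
  have hvφ : ∀ i, φ ((K.subtype ∘ v) i) = 0 := fun i ↦ (v i).2
  have h := dual_apply_eq_zero_of_mem_span hvφ (hL _ (hv.map' _ (ker_subtype _)))
  rwa [map_add, dual_apply_eq_zero_of_forall_apply_eq_zero hL hι hV hvφ, zero_add] at h

theorem exists_eq_sum_smul_of_forall_mem_span (hι : Fintype.card ι < finrank F V)
    (hV : 2 < finrank F V) : ∃ Y : ι → F, ∀ v, L v + b = ∑ i, Y i • v i := by
  have hsingle (i : ι) : ∃ c : F, L ∘ₗ LinearMap.single F (fun _ ↦ V) i = c • 1 :=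
    LinearMap.exists_eq_smul_id_of_forall_dual_apply_eq_zero fun φ w hw ↦
      dual_apply_single_eq_zero hL hι hV φ i hw
  choose Y hY using hsingle
  refine ⟨Y, fun v ↦ ?_⟩
  rw [eq_zero_of_forall_mem_span hL hι hV, add_zero, ← Finset.univ_sum_single v, map_sum]
  refine Finset.sum_congr rfl fun i _ ↦ ?_
  simpa using LinearMap.congr_fun (hY i) (v i)

end RowCondition

theorem mem_span_of_rank_lt {m p : ℕ} {M : Matrix (Fin m) (Fin p) F}
    (hM : LinearIndependent F M) {r : Fin p → F}
    (h : (Matrix.of fun (i : Fin (m + 1)) (j : Fin p) =>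
      if h : (i : ℕ) < m then M ⟨i, h⟩ j else r j).rank < m + 1) :
    r ∈ span F (range M) := by
  by_contra hr
  have hsnoc : (Matrix.of fun (i : Fin (m + 1)) (j : Fin p) =>
      if h : (i : ℕ) < m then M ⟨i, h⟩ j else r j) =
      Matrix.of (Fin.snoc (α := fun _ ↦ Fin p → F) M r) := by
    ext i j
    induction i using Fin.lastCases <;> simp [Fin.snoc]
  have hrows : LinearIndependent F (Matrix.of (Fin.snoc (α := fun _ ↦ Fin p → F) M r)).row :=
    linearIndependent_finSnoc.mpr ⟨hM, hr⟩
  rw [hsnoc, hrows.rank_matrix, Fintype.card_fin] at h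
  exact h.false

end LinearAlgebra

/-- Let `2 ≤ n ≤ p` with `p ≥ 3`, and let `φ : Mat_{n-1,p}(F) → Mat_{1,p}(F)` be an
affine map (written `N ↦ L(N) + b` with `L` linear and `b` constant) such that for every
`N`, appending the row `φ(N)` below `N` yields an `n×p` matrix of rank less than `n`.
Then `φ(N) = Yᵀ N` for some fixed `Y ∈ F^{n-1}`. -/
theorem affine_row_map_is_row_combination (F : Type*) [Field F]
    (n p : ℕ) (hn : 2 ≤ n) (hnp : n ≤ p) (hp : 3 ≤ p)
    (L : Matrix (Fin (n - 1)) (Fin p) F →ₗ[F] Matrix (Fin 1) (Fin p) F)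
    (b : Matrix (Fin 1) (Fin p) F)
    (hrk : ∀ N : Matrix (Fin (n - 1)) (Fin p) F,
      (Matrix.of fun (i : Fin n) (j : Fin p) =>
        if h : (i : ℕ) < n - 1 then N ⟨i, h⟩ j else (L N + b) 0 j).rank < n) :
    ∃ Y : Fin (n - 1) → F,
      ∀ (N : Matrix (Fin (n - 1)) (Fin p) F) (j : Fin p),
        (L N + b) 0 j = Matrix.vecMul Y N j := by
  obtain ⟨m, rfl⟩ : ∃ m, n = m + 1 := ⟨n - 1, by omega⟩
  have hspan (N : Matrix (Fin m) (Fin p) F) (hN : LinearIndependent F N) :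
      (LinearMap.proj 0 ∘ₗ L) N + b 0 ∈ span F (range N) :=
    mem_span_of_rank_lt hN (hrk N)
  obtain ⟨Y, hY⟩ := exists_eq_sum_smul_of_forall_mem_span hspan
    (by rw [Fintype.card_fin, finrank_fin_fun]; omega) (by rw [finrank_fin_fun]; omega)
  refine ⟨Y, fun N j ↦ ?_⟩
  rw [Matrix.vecMul_eq_sum]
  exact congrFun (hY N) j
end

section
/- Let F be a field, and let U and V be F-vector spaces of the same finite dimension p ≥ 1. Let x ∈ U be nonzero, and let S be a linear subspace of Hom(U,V) that contains every operator u with u(x) = 0. If S contains some operator u₀ with u₀(x) ≠ 0, then S contains a bijective operator. -/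
/-!
Any nonzero vector of `U` can be sent to any nonzero vector of `V` by a linear isomorphism,
since `U` and `V` have the same dimension. Apply this to `x` and `u₀ x`: the resulting
isomorphism `u` differs from `u₀` by an operator vanishing at `x`, hence lies in `S`.
-/

section

variable {K V W : Type*} [DivisionRing K] [AddCommGroup V] [Module K V]
  [AddCommGroup W] [Module K W]

theorem LinearEquiv.exists_apply_eq_of_ne_zero {v w : V} (hv : v ≠ 0) (hw : w ≠ 0) :
    ∃ g : V ≃ₗ[K] V, g v = w := by
  let f : K ∙ v ≃ₗ[K] K ∙ w := coord K V v hv ≪≫ₗ toSpanNonzeroSingleton K V w hw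
  obtain ⟨g, hg⟩ := Submodule.exists_linearEquiv_restrict_eq f
  refine ⟨g, ?_⟩
  simpa [f, coord_self] using (hg ⟨v, Submodule.mem_span_singleton_self v⟩).symm

theorem LinearEquiv.exists_apply_eq_of_finrank_eq [FiniteDimensional K V]
    [FiniteDimensional K W] (h : Module.finrank K V = Module.finrank K W) {v : V} {w : W}
    (hv : v ≠ 0) (hw : w ≠ 0) : ∃ e : V ≃ₗ[K] W, e v = w := by
  let e₀ := LinearEquiv.ofFinrankEq V W h
  obtain ⟨g, hg⟩ := exists_apply_eq_of_ne_zero (K := K) (e₀.map_ne_zero_iff.mpr hv) hw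
  exact ⟨e₀ ≪≫ₗ g, hg⟩

end

theorem Submodule.mem_of_apply_eq {R M N : Type*} [CommRing R] [AddCommGroup M] [Module R M]
    [AddCommGroup N] [Module R N] {S : Submodule R (M →ₗ[R] N)} {v : M}
    (hS : ∀ u : M →ₗ[R] N, u v = 0 → u ∈ S) {u₀ u : M →ₗ[R] N} (hu₀ : u₀ ∈ S)
    (h : u v = u₀ v) : u ∈ S := by
  have hdiff : u - u₀ ∈ S := hS _ (by simp [h])
  simpa using S.add_mem hdiff hu₀

theorem contains_bijective_operator_general (F : Type*) [Field F]
    (U V : Type*) [AddCommGroup U] [Module F U] [AddCommGroup V] [Module F V]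
    [FiniteDimensional F U] [FiniteDimensional F V]
    (p : ℕ) (hU : Module.finrank F U = p) (hV : Module.finrank F V = p)
    (x : U) (hx : x ≠ 0)
    (S : Submodule F (U →ₗ[F] V))
    (hall : ∀ u : U →ₗ[F] V, u x = 0 → u ∈ S)
    (hex : ∃ u₀ ∈ S, u₀ x ≠ 0) :
    ∃ u ∈ S, Function.Bijective u := by
  obtain ⟨u₀, hu₀, hu₀x⟩ := hex
  obtain ⟨e, he⟩ := LinearEquiv.exists_apply_eq_of_finrank_eq (hU.trans hV.symm) hx hu₀x
  exact ⟨e, Submodule.mem_of_apply_eq hall hu₀ he, e.bijective⟩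

/-- Let `U, V` have the same finite dimension `p ≥ 1`, let `x ∈ U` be nonzero, and let
`S` be a linear subspace of `Hom(U,V)` containing every operator vanishing at `x`.
If `S` contains some operator not vanishing at `x`, then `S` contains a bijective
operator. -/
theorem contains_bijective_operator (F : Type*) [Field F]
    (U V : Type*) [AddCommGroup U] [Module F U] [AddCommGroup V] [Module F V]
    [FiniteDimensional F U] [FiniteDimensional F V]
    (p : ℕ) (hp : 1 ≤ p) (hU : Module.finrank F U = p) (hV : Module.finrank F V = p)
    (x : U) (hx : x ≠ 0)
    (S : Submodule F (U →ₗ[F] V))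
    (hall : ∀ u : U →ₗ[F] V, u x = 0 → u ∈ S)
    (hex : ∃ u₀ ∈ S, u₀ x ≠ 0) :
    ∃ u ∈ S, Function.Bijective u :=
  contains_bijective_operator_general F U V p hU hV x hx S hall hex
end
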